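/- For every λ ∈ ℝ, let μ_λ be the Lie bracket on ℝ^7 with nonzero basis brackets [e1,e2]=e3, [e1,e3]=e4, [e1,e4]=e5, [e1,e5]=e6, [e1,e6]=e7, [e2,e3]=e5, [e2,e4]=e6, [e2,e5]=λe7, [e3,e4]=(1-λ)e7. Then μ_λ satisfies the Jacobi identity, φ = (1/5)·diag(1,2,3,4,5,6,7) is a derivation of (ℝ^7,μ_λ), and φ is pre-Einstein, i.e. trace(φ∘ψ) = trace(ψ) for every derivation ψ of (ℝ^7,μ_λ). -/

import Mathlib

open Finset

noncomputable section

/-- `ℝ⁷` with its standard basis and standard inner product. -/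
abbrev V7 : Type := Fin 7 → ℝ

/-- The standard basis vector `e i`. -/
def e (i : Fin 7) : V7 := Pi.single i 1

/-- The standard inner product on `ℝ⁷`. -/
def dot (x y : V7) : ℝ := ∑ i, x i * y i

/-- Structure constants built from a list of entries `(i, j, k, a)`, each meaning that
`μ (e i) (e j)` has component `a` along `e k` (and `μ (e j) (e i)` has component `-a`);
all unlisted basis brackets are `0`. -/
def toC (L : List (Fin 7 × Fin 7 × Fin 7 × ℝ)) (i j k : Fin 7) : ℝ :=
  (L.map fun t =>
      (if t.1 = i ∧ t.2.1 = j ∧ t.2.2.1 = k then t.2.2.2 else 0)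
    - (if t.1 = j ∧ t.2.1 = i ∧ t.2.2.1 = k then t.2.2.2 else 0)).sum

/-- The bilinear skew-symmetric map on `ℝ⁷` with structure constants `c`. -/
def br (c : Fin 7 → Fin 7 → Fin 7 → ℝ) (x y : V7) : V7 :=
  fun k => ∑ i, ∑ j, x i * y j * c i j k

lemma br_add_left (c : Fin 7 → Fin 7 → Fin 7 → ℝ) (x x' y : V7) :
    br c (x + x') y = br c x y + br c x' y := by
  funext k
  simp only [br, Pi.add_apply, ← Finset.sum_add_distrib]
  exact Finset.sum_congr rfl fun i _ => Finset.sum_congr rfl fun j _ => by ring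

lemma br_smul_left (c : Fin 7 → Fin 7 → Fin 7 → ℝ) (r : ℝ) (x y : V7) :
    br c (r • x) y = r • br c x y := by
  funext k
  simp only [br, Pi.smul_apply, smul_eq_mul, Finset.mul_sum]
  exact Finset.sum_congr rfl fun i _ => Finset.sum_congr rfl fun j _ => by ring

lemma br_add_right (c : Fin 7 → Fin 7 → Fin 7 → ℝ) (x y y' : V7) :
    br c x (y + y') = br c x y + br c x y' := by
  funext k
  simp only [br, Pi.add_apply, ← Finset.sum_add_distrib]
  exact Finset.sum_congr rfl fun i _ => Finset.sum_congr rfl fun j _ => by ring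

lemma br_smul_right (c : Fin 7 → Fin 7 → Fin 7 → ℝ) (r : ℝ) (x y : V7) :
    br c x (r • y) = r • br c x y := by
  funext k
  simp only [br, Pi.smul_apply, smul_eq_mul, Finset.mul_sum]
  exact Finset.sum_congr rfl fun i _ => Finset.sum_congr rfl fun j _ => by ring

lemma br_zero_left (c : Fin 7 → Fin 7 → Fin 7 → ℝ) (y : V7) : br c 0 y = 0 := by
  funext k; simp [br]

lemma br_zero_right (c : Fin 7 → Fin 7 → Fin 7 → ℝ) (x : V7) : br c x 0 = 0 := by
  funext k; simp [br]

/-- The space of derivations of the algebra `(ℝ⁷, br c)`, i.e. the linear maps `D` with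
`D (μ x y) = μ (D x) y + μ x (D y)` for all `x, y`, as a submodule of the endomorphisms. -/
def derivations (c : Fin 7 → Fin 7 → Fin 7 → ℝ) : Submodule ℝ (Module.End ℝ V7) where
  carrier := {D | ∀ x y, D (br c x y) = br c (D x) y + br c x (D y)}
  add_mem' := by
    intro D E hD hE x y
    simp only [LinearMap.add_apply, hD x y, hE x y, br_add_left, br_add_right]
    abel
  zero_mem' := by
    intro x y
    simp [br_zero_left, br_zero_right]
  smul_mem' := by
    intro r D hD x y
    simp only [LinearMap.smul_apply, hD x y, smul_add, br_smul_left, br_smul_right]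

/-- The Jacobi identity for the bracket `br c`. -/
def Jacobi (c : Fin 7 → Fin 7 → Fin 7 → ℝ) : Prop :=
  ∀ x y z : V7, br c (br c x y) z + br c (br c y z) x + br c (br c z x) y = 0

/-- Skew-symmetry of the bracket `br c`. -/
def Skew (c : Fin 7 → Fin 7 → Fin 7 → ℝ) : Prop :=
  ∀ x y : V7, br c x y = - br c y x

/-- The diagonal endomorphism `diag (a 1, …, a 7)` of `ℝ⁷`, `e i ↦ a i • e i`. -/
def diagL (a : Fin 7 → ℝ) : Module.End ℝ V7 :=
  LinearMap.pi fun i => a i • LinearMap.proj i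

/-- Structure constants of the bracket `μ_λ` with nonzero basis brackets
`[e1,e2]=e3, [e1,e3]=e4, [e1,e4]=e5, [e1,e5]=e6, [e1,e6]=e7, [e2,e3]=e5, [e2,e4]=e6,
[e2,e5]=λe7, [e3,e4]=(1-λ)e7`. -/
def c6 (lam : ℝ) : Fin 7 → Fin 7 → Fin 7 → ℝ :=
  toC [(0, 1, 2, (1:ℝ)),
   (0, 2, 3, 1),
   (0, 3, 4, 1),
   (0, 4, 5, 1),
   (0, 5, 6, 1),
   (1, 2, 4, 1),
   (1, 3, 5, 1),
   (1, 4, 6, lam),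
   (2, 3, 6, 1 - lam)]

/-!
The structure constants are `c6 λ = c6₀ + λ c6₁` with `c6₀, c6₁` integer-valued, so the cyclic
sums expressing the Jacobi identity are quadratic polynomials in `λ` whose three coefficients are
finite integer identities, checked by `decide`. The bracket is graded by `eᵢ ↦ i`, which makes
`diag (1, …, 7)` a derivation. For a derivation `ψ`, a bracket `[eᵢ, eⱼ] = eₖ` such that `eᵢ`
(resp. `eⱼ`) is the only basis vector whose bracket with `eⱼ` (resp. `eᵢ`) has an `eₖ`-component
forces `ψₖₖ = ψᵢᵢ + ψⱼⱼ`; the relations coming from `[e1,e5] = e6`, `[e1,e6] = e7`,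
`[e2,e3] = e5`, `[e2,e4] = e6` already give `∑ᵢ (i - 5) ψᵢᵢ = 0`, which is `trace (φ ψ) = trace ψ`.
-/

/-- For structure constants `c`, `jacobiator c c i j l k` is the `eₖ`-coefficient of
`[[eᵢ, eⱼ], eₗ] + [[eⱼ, eₗ], eᵢ] + [[eₗ, eᵢ], eⱼ]`; `jacobiator a b` is its polarization. -/
def jacobiator {R : Type*} [CommRing R] (a b : Fin 7 → Fin 7 → Fin 7 → R) (i j l k : Fin 7) : R :=
  ∑ m, (a i j m * b m l k + a j l m * b m i k + a l i m * b m j k)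

section StructureConstants

variable (c : Fin 7 → Fin 7 → Fin 7 → ℝ)

lemma br_apply (x y : V7) (k : Fin 7) : br c x y k = ∑ i, ∑ j, x i * y j * c i j k := rfl

lemma br_e_left (i : Fin 7) (v : V7) (k : Fin 7) : br c (e i) v k = ∑ j, v j * c i j k := by
  simp [br_apply, e, Pi.single_apply]

lemma br_e_right (v : V7) (j k : Fin 7) : br c v (e j) k = ∑ i, v i * c i j k := by
  simp [br_apply, e, Pi.single_apply]

lemma skew_of_antisymm (h : ∀ i j k, c j i k = -c i j k) : Skew c := by
  intro x y
  funext k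
  simp only [br_apply, Pi.neg_apply, ← sum_neg_distrib]
  rw [sum_comm]
  refine sum_congr rfl fun j _ => sum_congr rfl fun i _ => ?_
  rw [h]
  ring

lemma br_br_apply (x y z : V7) (k : Fin 7) :
    br c (br c x y) z k = ∑ i, ∑ j, ∑ l, x i * y j * z l * ∑ m, c i j m * c m l k := by
  calc br c (br c x y) z k = ∑ m, ∑ l, ∑ i, ∑ j, x i * y j * z l * (c i j m * c m l k) := by
        simp only [br_apply, sum_mul]
        exact sum_congr rfl fun m _ => sum_congr rfl fun l _ => sum_congr rfl fun i _ =>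
          sum_congr rfl fun j _ => by ring
    _ = ∑ i, ∑ j, ∑ l, ∑ m, x i * y j * z l * (c i j m * c m l k) := by
        rw [sum_comm_cycle]
        refine sum_congr rfl fun i _ => ?_
        rw [sum_comm_cycle]
        exact sum_congr rfl fun j _ => sum_comm
    _ = _ := by simp only [mul_sum]

lemma jacobi_of_jacobiator_eq_zero (h : ∀ i j l k, jacobiator c c i j l k = 0) : Jacobi c := by
  intro x y z
  funext k
  simp only [Pi.add_apply, Pi.zero_apply, br_br_apply]
  rw [sum_comm_cycle (f := fun i j l => y i * z j * x l * _),
    ← sum_comm_cycle (f := fun i j l => z l * x i * y j * _)]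
  simp only [← sum_add_distrib]
  refine sum_eq_zero fun i _ => sum_eq_zero fun j _ => sum_eq_zero fun l _ => ?_
  have hijl := h i j l k
  simp only [jacobiator, sum_add_distrib] at hijl
  linear_combination x i * y j * z l * hijl

lemma diagL_apply (a : Fin 7 → ℝ) (v : V7) (k : Fin 7) : diagL a v k = a k * v k := rfl

lemma diagL_mem_derivations (a : Fin 7 → ℝ)
    (h : ∀ i j k, a k * c i j k = (a i + a j) * c i j k) : diagL a ∈ derivations c := by
  intro x y
  funext k
  simp only [diagL_apply, Pi.add_apply, br_apply, mul_sum, ← sum_add_distrib]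
  exact sum_congr rfl fun i _ => sum_congr rfl fun j _ => by linear_combination x i * y j * h i j k

lemma diag_eq_add_of_mem_derivations {ψ : Module.End ℝ V7} (hψ : ψ ∈ derivations c)
    {i j k : Fin 7} (hij : ∀ p, c i j p = if p = k then 1 else 0)
    (hi : ∀ s, c s j k = if s = i then 1 else 0) (hj : ∀ t, c i t k = if t = j then 1 else 0) :
    ψ (e k) k = ψ (e i) i + ψ (e j) j := by
  have hek : br c (e i) (e j) = e k := by
    funext p
    rw [br_e_left]
    simp [e, Pi.single_apply, hij]
  have hk := congrFun (hψ (e i) (e j)) k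
  simpa [hek, br_e_left, br_e_right, hi, hj] using hk

end StructureConstants

lemma trace_eq_sum_diag (ψ : Module.End ℝ V7) : LinearMap.trace ℝ V7 ψ = ∑ i, ψ (e i) i := by
  rw [LinearMap.trace_eq_matrix_trace ℝ (Pi.basisFun ℝ (Fin 7)) ψ, Matrix.trace]
  simp [e]

lemma trace_diagL_comp (a : Fin 7 → ℝ) (ψ : Module.End ℝ V7) :
    LinearMap.trace ℝ V7 (diagL a ∘ₗ ψ) = ∑ i, a i * ψ (e i) i :=
  trace_eq_sum_diag _

lemma toC_swap (L : List (Fin 7 × Fin 7 × Fin 7 × ℝ)) (i j k : Fin 7) :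
    toC L j i k = -toC L i j k := by
  induction L with
  | nil => simp [toC]
  | cons t L ih =>
    simp only [toC, List.map_cons, List.sum_cons] at ih ⊢
    linarith

lemma jacobiator_add_mul {R : Type*} [CommRing R] (a b : Fin 7 → Fin 7 → Fin 7 → R) (t : R)
    (i j l k : Fin 7) :
    jacobiator (fun i j k => a i j k + t * b i j k) (fun i j k => a i j k + t * b i j k) i j l k
      = jacobiator a a i j l k + t * (jacobiator a b i j l k + jacobiator b a i j l k)
        + t ^ 2 * jacobiator b b i j l k := by
  simp only [jacobiator, mul_sum, ← sum_add_distrib]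
  exact sum_congr rfl fun m _ => by ring

lemma jacobiator_intCast {R : Type*} [CommRing R] (a b : Fin 7 → Fin 7 → Fin 7 → ℤ)
    (i j l k : Fin 7) :
    jacobiator (fun i j k => (a i j k : R)) (fun i j k => (b i j k : R)) i j l k
      = jacobiator a b i j l k := by
  simp [jacobiator]

def toCℤ (L : List (Fin 7 × Fin 7 × Fin 7 × ℤ)) (i j k : Fin 7) : ℤ :=
  (L.map fun t =>
      (if t.1 = i ∧ t.2.1 = j ∧ t.2.2.1 = k then t.2.2.2 else 0)
    - (if t.1 = j ∧ t.2.1 = i ∧ t.2.2.1 = k then t.2.2.2 else 0)).sum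

/-- `c6 λ = c6₀ + λ • c6₁` (`c6_apply`); integer values make the identities below decidable. -/
def c6₀ : Fin 7 → Fin 7 → Fin 7 → ℤ :=
  toCℤ [(0, 1, 2, 1), (0, 2, 3, 1), (0, 3, 4, 1), (0, 4, 5, 1), (0, 5, 6, 1), (1, 2, 4, 1),
    (1, 3, 5, 1), (2, 3, 6, 1)]

def c6₁ : Fin 7 → Fin 7 → Fin 7 → ℤ :=
  toCℤ [(1, 4, 6, 1), (2, 3, 6, -1)]

lemma c6_apply (lam : ℝ) (i j k : Fin 7) : c6 lam i j k = c6₀ i j k + lam * c6₁ i j k := by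
  simp only [c6, c6₀, c6₁, toC, toCℤ, List.map_cons, List.map_nil, List.sum_cons, List.sum_nil]
  push_cast
  simp only [← mul_boole _ lam, ← mul_boole _ (1 - lam), ← mul_boole _ (-1 : ℝ)]
  ring

set_option maxRecDepth 40000 in
lemma jacobiator_c6₀ : ∀ i j l k, jacobiator c6₀ c6₀ i j l k = 0 := by decide

set_option maxRecDepth 40000 in
lemma jacobiator_c6₀_c6₁ :
    ∀ i j l k, jacobiator c6₀ c6₁ i j l k + jacobiator c6₁ c6₀ i j l k = 0 := by
  decide

set_option maxRecDepth 40000 in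
lemma jacobiator_c6₁ : ∀ i j l k, jacobiator c6₁ c6₁ i j l k = 0 := by decide

set_option maxRecDepth 40000 in
lemma c6₀_graded : ∀ i j k : Fin 7,
    (((k : ℕ) : ℤ) + 1) * c6₀ i j k = ((((i : ℕ) : ℤ) + 1) + (((j : ℕ) : ℤ) + 1)) * c6₀ i j k := by
  decide

set_option maxRecDepth 40000 in
lemma c6₁_graded : ∀ i j k : Fin 7,
    (((k : ℕ) : ℤ) + 1) * c6₁ i j k = ((((i : ℕ) : ℤ) + 1) + (((j : ℕ) : ℤ) + 1)) * c6₁ i j k := by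
  decide

lemma skew_c6 (lam : ℝ) : Skew (c6 lam) :=
  skew_of_antisymm _ fun i j k => toC_swap _ i j k

lemma jacobi_c6 (lam : ℝ) : Jacobi (c6 lam) := by
  refine jacobi_of_jacobiator_eq_zero _ fun i j l k => ?_
  have hc : c6 lam = fun i j k => ((c6₀ i j k : ℤ) : ℝ) + lam * ((c6₁ i j k : ℤ) : ℝ) :=
    funext₃ (c6_apply lam)
  rw [hc, jacobiator_add_mul, jacobiator_intCast, jacobiator_intCast, jacobiator_intCast,
    jacobiator_intCast, jacobiator_c6₀, jacobiator_c6₁, ← Int.cast_add, jacobiator_c6₀_c6₁]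
  simp

lemma diagL_weights_mem_derivations (lam : ℝ) :
    diagL ![1, 2, 3, 4, 5, 6, 7] ∈ derivations (c6 lam) := by
  have hw : (![1, 2, 3, 4, 5, 6, 7] : Fin 7 → ℝ) = fun i : Fin 7 => ((i : ℕ) : ℝ) + 1 := by
    funext i; fin_cases i <;> norm_num
  refine diagL_mem_derivations _ _ fun i j k => ?_
  have h₀ := congrArg (Int.cast : ℤ → ℝ) (c6₀_graded i j k)
  have h₁ := congrArg (Int.cast : ℤ → ℝ) (c6₁_graded i j k)
  push_cast at h₀ h₁
  rw [hw, c6_apply]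
  linear_combination h₀ + lam * h₁

lemma diag_relations_c6 (lam : ℝ) {ψ : Module.End ℝ V7} (hψ : ψ ∈ derivations (c6 lam)) :
    ψ (e 5) 5 = ψ (e 0) 0 + ψ (e 4) 4 ∧ ψ (e 6) 6 = ψ (e 0) 0 + ψ (e 5) 5 ∧
      ψ (e 4) 4 = ψ (e 1) 1 + ψ (e 2) 2 ∧ ψ (e 5) 5 = ψ (e 1) 1 + ψ (e 3) 3 := by
  refine ⟨?_, ?_, ?_, ?_⟩ <;> refine diag_eq_add_of_mem_derivations _ hψ ?_ ?_ ?_ <;>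
    intro p <;> fin_cases p <;> simp [c6, toC]

/-- The bracket satisfies the Jacobi identity (and is skew-symmetric), `φ` is a derivation
of it, and `φ` is pre-Einstein: `trace (φ ∘ ψ) = trace ψ` for every derivation `ψ`. -/
theorem stmt (lam : ℝ) :
    Skew (c6 lam) ∧ Jacobi (c6 lam) ∧
    ((1/5 : ℝ) • diagL ![1, 2, 3, 4, 5, 6, 7]) ∈ derivations (c6 lam) ∧
    ∀ ψ ∈ derivations (c6 lam),
      LinearMap.trace ℝ V7 (((1/5 : ℝ) • diagL ![1, 2, 3, 4, 5, 6, 7]) ∘ₗ ψ) = LinearMap.trace ℝ V7 ψ := by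
  refine ⟨skew_c6 lam, jacobi_c6 lam,
    Submodule.smul_mem _ _ (diagL_weights_mem_derivations lam), fun ψ hψ => ?_⟩
  obtain ⟨h₁₅, h₁₆, h₂₃, h₂₄⟩ := diag_relations_c6 lam hψ
  rw [LinearMap.smul_comp, map_smul, trace_diagL_comp, trace_eq_sum_diag]
  simp only [one_div, Fin.sum_univ_seven, Fin.isValue, Matrix.cons_val_zero, one_mul,
    Matrix.cons_val_one, Matrix.cons_val, smul_eq_mul]
  linarith
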